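/- Let R ⊆ A be the k-linear span of all elements h^l_n(w) − w for monomials w and 2 ≤ n ≤ len(w). Then for every monomial w of length n ≥ 1, the element η(w) − (−1)^{n−1}·n·w lies in R. (Equivalently, η(w) = (−1)^{n−1}·n·w in the quotient A/R.) -/

import Mathlib

noncomputable section

abbrev FA (k : Type*) [Field k] (p : ℕ) := MonoidAlgebra k (FreeMonoid (Fin p))

def mon (k : Type*) [Field k] {p : ℕ} (l : List (Fin p)) : FA k p :=
  MonoidAlgebra.of k (FreeMonoid (Fin p)) (FreeMonoid.ofList l)

def etaRev (k : Type*) [Field k] {p : ℕ} : List (Fin p) → FA k p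
  | [] => 0
  | [a] => mon k [a]
  | a :: b :: l => mon k [a] * etaRev k (b :: l) - etaRev k (b :: l) * mon k [a]

def etaList (k : Type*) [Field k] {p : ℕ} (l : List (Fin p)) : FA k p :=
  etaRev k l.reverse

def etaLin (k : Type*) [Field k] (p : ℕ) : FA k p →ₗ[k] FA k p :=
  Finsupp.lift (FA k p) k (FreeMonoid (Fin p)) (fun w => etaList k (FreeMonoid.toList w)) ∘ₗ
    (MonoidAlgebra.coeffLinearEquiv k).toLinearMap

/-- The fold move `h^l_n` on a monomial (word). -/
def hl (k : Type*) [Field k] {p : ℕ} (n : ℕ) (l : List (Fin p)) : FA k p :=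
  if 2 ≤ n ∧ n ≤ l.length then
    ((-1 : k) ^ (n - 1)) •
      (mon k ((l.drop (n - 1)).take 1) * etaList k (l.take (n - 1)) * mon k (l.drop n))
  else mon k l

def hlLin (k : Type*) [Field k] (p n : ℕ) : FA k p →ₗ[k] FA k p :=
  Finsupp.lift (FA k p) k (FreeMonoid (Fin p)) (fun w => hl k n (FreeMonoid.toList w)) ∘ₗ
    (MonoidAlgebra.coeffLinearEquiv k).toLinearMap

/-- The span of the `H^l` relations `h^l_n(w) - w`. -/
def Rspan (k : Type*) [Field k] (p : ℕ) : Submodule k (FA k p) :=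
  Submodule.span k
    {x | ∃ (l : List (Fin p)) (n : ℕ), 2 ≤ n ∧ n ≤ l.length ∧ x = hl k n l - mon k l}


/-! Induct on the word from the right. The top fold of `l ++ [a]` is `(-1)^|l| · a η(l)`, so
`a η(l) ≡ (-1)^|l| · l a`. The lower folds of `l ++ [a]` are those of `l` followed by `a`, so `R` is
stable under right multiplication by monomials and the induction hypothesis gives
`η(l) a ≡ (-1)^(|l|-1) |l| · l a`. Since `η(l a) = a η(l) - η(l) a`, the coefficients add up to
`(-1)^|l| (|l| + 1)`. -/

section

variable (k : Type*) [Field k] {p : ℕ}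

lemma mon_append (l l' : List (Fin p)) : mon k (l ++ l') = mon k l * mon k l' := by
  rw [mon, mon, mon, ← map_mul]
  rfl

lemma etaList_append_singleton (a : Fin p) {l : List (Fin p)} (hne : l ≠ []) :
    etaList k (l ++ [a]) = mon k [a] * etaList k l - etaList k l * mon k [a] := by
  obtain ⟨b, t, ht⟩ := List.exists_cons_of_ne_nil (List.reverse_ne_nil_iff.mpr hne)
  rw [etaList, etaList, List.reverse_append, List.reverse_singleton, List.singleton_append, ht,
    etaRev]

lemma hl_append {n : ℕ} {l : List (Fin p)} (hn : 2 ≤ n) (hnl : n ≤ l.length)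
    (l' : List (Fin p)) : hl k n (l ++ l') = hl k n l * mon k l' := by
  have hn1 : n - 1 ≤ l.length := by omega
  have hn1' : 1 ≤ (l.drop (n - 1)).length := by simp only [List.length_drop]; omega
  rw [hl, hl, if_pos ⟨hn, by simp only [List.length_append]; omega⟩, if_pos ⟨hn, hnl⟩,
    List.take_append_of_le_length hn1, List.drop_append_of_le_length hn1,
    List.drop_append_of_le_length hnl, List.take_append_of_le_length hn1', mon_append,
    smul_mul_assoc, ← mul_assoc]

lemma hl_length_add_one_append_singleton (a : Fin p) {l : List (Fin p)} (hne : l ≠ []) :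
    hl k (l.length + 1) (l ++ [a]) = (-1 : k) ^ l.length • (mon k [a] * etaList k l) := by
  have hlen : 2 ≤ l.length + 1 := Nat.succ_le_succ (List.length_pos_of_ne_nil hne)
  rw [hl, if_pos ⟨hlen, by simp⟩, Nat.add_sub_cancel, List.drop_left, List.take_left,
    List.drop_length_add_append]
  have hnil : mon k ([] : List (Fin p)) = 1 := rfl
  rw [List.take_one, List.drop_one]
  simp only [List.head?_cons, Option.toList_some, List.tail_cons, hnil, mul_one]

lemma mul_mon_mem_Rspan {x : FA k p} (hx : x ∈ Rspan k p) (l' : List (Fin p)) :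
    x * mon k l' ∈ Rspan k p := by
  suffices Rspan k p ≤ (Rspan k p).comap (LinearMap.mulRight k (mon k l')) from this hx
  refine Submodule.span_le.mpr ?_
  rintro _ ⟨l, n, hn, hnl, rfl⟩
  refine Submodule.subset_span ⟨l ++ l', n, hn, by simp only [List.length_append]; omega, ?_⟩
  rw [LinearMap.mulRight_apply, sub_mul, hl_append k hn hnl, mon_append]

lemma mon_mul_etaList_sub_mem_Rspan (a : Fin p) {l : List (Fin p)} (hne : l ≠ []) :
    mon k [a] * etaList k l - (-1 : k) ^ l.length • mon k (l ++ [a]) ∈ Rspan k p := by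
  have hfold : hl k (l.length + 1) (l ++ [a]) - mon k (l ++ [a]) ∈ Rspan k p :=
    Submodule.subset_span ⟨l ++ [a], l.length + 1,
      Nat.succ_le_succ (List.length_pos_of_ne_nil hne), by simp, rfl⟩
  have hsq : (-1 : k) ^ l.length * (-1 : k) ^ l.length = 1 := by
    rw [← mul_pow, neg_one_mul, neg_neg, one_pow]
  convert Submodule.smul_mem _ ((-1 : k) ^ l.length) hfold using 1
  rw [hl_length_add_one_append_singleton k a hne, smul_sub, smul_smul, hsq, one_smul]

lemma etaList_sub_mem_Rspan (w : List (Fin p)) :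
    etaList k w - ((-1 : k) ^ (w.length - 1) * (w.length : k)) • mon k w ∈ Rspan k p := by
  induction w using List.reverseRecOn with
  | nil => simp [etaList, etaRev]
  | append_singleton l a ih =>
    rcases eq_or_ne l [] with rfl | hne
    · simp [etaList, etaRev]
    obtain ⟨m, hm⟩ : ∃ m, l.length = m + 1 :=
      Nat.exists_eq_add_one.mpr (List.length_pos_of_ne_nil hne)
    convert Submodule.sub_mem _ (mon_mul_etaList_sub_mem_Rspan k a hne)
      (mul_mon_mem_Rspan k ih [a]) using 1
    rw [etaList_append_singleton k a hne, sub_mul, smul_mul_assoc, ← mon_append]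
    simp only [List.length_append, List.length_singleton, Nat.add_sub_cancel, hm]
    push_cast
    rw [pow_succ]
    module

end

theorem eta_mod_R_general (k : Type*) [Field k] {p n : ℕ}
    (w : List (Fin p)) (hw : w.length = n) :
    etaList k w - ((-1 : k) ^ (n - 1) * (n : k)) • mon k w ∈ Rspan k p :=
  hw ▸ etaList_sub_mem_Rspan k w

/-- η(w) ≡ (−1)^{n−1}·n·w modulo the span R of the relations h^l_n(w) − w. -/
theorem eta_mod_R (k : Type*) [Field k] (hk : ringChar k ≠ 2) {p n : ℕ} (hn : 1 ≤ n)
    (w : List (Fin p)) (hw : w.length = n) :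
    etaList k w - ((-1 : k) ^ (n - 1) * (n : k)) • mon k w ∈ Rspan k p :=
  eta_mod_R_general k w hw
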